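/- The C-algebras Λ := C⟨x,y⟩/(xy+yx, x³-y²) and Γ := C⟨a,b⟩/(ab+ba, -a²+b³+aba) are not isomorphic as C-algebras. -/

import Mathlib

open FreeAlgebra

/-- The relations defining Λ = C⟨x,y⟩/(xy+yx, x³-y²), with x = ι ℂ 0 and y = ι ℂ 1. -/
inductive LamRel : FreeAlgebra ℂ (Fin 2) → FreeAlgebra ℂ (Fin 2) → Prop
  | r1 : LamRel (ι ℂ 0 * ι ℂ 1 + ι ℂ 1 * ι ℂ 0) 0
  | r2 : LamRel ((ι ℂ 0) ^ 3 - (ι ℂ 1) ^ 2) 0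

/-- The relations defining Γ = C⟨a,b⟩/(ab+ba, -a²+b³+aba), with a = ι ℂ 0 and b = ι ℂ 1. -/
inductive GamRel : FreeAlgebra ℂ (Fin 2) → FreeAlgebra ℂ (Fin 2) → Prop
  | r1 : GamRel (ι ℂ 0 * ι ℂ 1 + ι ℂ 1 * ι ℂ 0) 0
  | r2 : GamRel (-(ι ℂ 0) ^ 2 + (ι ℂ 1) ^ 3 + ι ℂ 0 * ι ℂ 1 * ι ℂ 0) 0

/-!
Let `𝔪 = (x, y)`. The truncation `Λ/𝔪⁵` is 8-dimensional, its multiplication being determined by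
`yx = -xy`, `y² = x³` and `x⁵ = x³y = 0`. An isomorphism `Λ ≃ Γ` would give a surjection
`Γ → Λ/𝔪⁵`. Solving the relations of `Γ` order by order in `Λ/𝔪⁵` shows that every algebra map
`Γ → Λ/𝔪⁵` sends `a` into `𝔪²`, so its image meets `𝔪/𝔪² = ⟨x, y⟩` only in the line spanned by
the image of `b`.
-/

theorem gamRel_scalar_eq_zero {K : Type*} [Field K] [CharZero K] {a b : K}
    (h₁ : a * b + b * a = 0) (h₂ : -(a * a) + b * b * b + a * b * a = 0) : a = 0 ∧ b = 0 := by
  have hab : a * b = 0 := by linear_combination h₁ / 2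
  rcases mul_eq_zero.mp hab with ha | hb
  · subst ha
    exact ⟨rfl, pow_eq_zero_iff (n := 3) (by norm_num) |>.mp (by linear_combination h₂)⟩
  · subst hb
    exact ⟨mul_self_eq_zero.mp (by linear_combination -h₂), rfl⟩

/-- The unknowns are the coefficients of `x²`, `y` in the image of `a` and of `x`, `x²`, `y` in
the image of `b` in `Λ/𝔪⁵`; the hypotheses are the coefficients of `x³`, `x⁴`, `x²y` in the two
relations of `Γ`. -/
theorem gamRel_coeff_y_eq_zero {K : Type*} [Field K] [CharZero K] {a₂ a₅ b₁ b₂ b₅ : K}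
    (h₃ : b₁ ^ 3 = a₅ ^ 2) (h₄ : a₂ ^ 2 = 3 * b₁ ^ 2 * b₂ + b₁ * b₅ ^ 2 - a₅ ^ 2 * b₁)
    (h₇ : 2 * a₂ * a₅ = b₁ ^ 2 * b₅) (k₃ : a₂ * b₁ + a₅ * b₅ = 0)
    (k₇ : a₂ * b₅ + a₅ * b₂ = 0) : a₅ = 0 := by
  by_contra ha₅
  have hb₁ : b₁ ≠ 0 := by
    rintro rfl
    exact ha₅ (pow_eq_zero_iff two_ne_zero |>.mp (by linear_combination -h₃))
  have hb₅ : b₅ = 0 := by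
    have h : 3 * a₅ ^ 2 * b₅ = 0 := by linear_combination 2 * a₅ * k₃ - b₁ * h₇ - b₅ * h₃
    simpa [ha₅] using h
  have ha₂ : a₂ = 0 := by
    have h : a₂ * b₁ = 0 := by linear_combination k₃ - a₅ * hb₅
    simpa [hb₁] using h
  have hb₂ : b₂ = 0 := by
    have h : a₅ * b₂ = 0 := by linear_combination k₇ - b₅ * ha₂
    simpa [ha₅] using h
  have h : a₅ ^ 2 * b₁ = 0 := by
    linear_combination h₄ - a₂ * ha₂ + 3 * b₁ ^ 2 * hb₂ + b₁ * b₅ * hb₅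
  simp [ha₅, hb₁] at h

theorem RingQuot.range_le_of_forall_mkAlgHom_ι_mem {R X A : Type*} [CommSemiring R] [Semiring A]
    [Algebra R A] {r : FreeAlgebra R X → FreeAlgebra R X → Prop} (ψ : RingQuot r →ₐ[R] A)
    {S : Subalgebra R A} (h : ∀ i, ψ (RingQuot.mkAlgHom R r (ι R i)) ∈ S) : ψ.range ≤ S := by
  rintro _ ⟨z, rfl⟩
  obtain ⟨w, rfl⟩ := RingQuot.mkAlgHom_surjective R r z
  induction w using FreeAlgebra.induction with
  | grade0 c => simp
  | grade1 i => exact h i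
  | mul u v hu hv => simpa using S.mul_mem hu hv
  | add u v hu hv => simpa using S.add_mem hu hv

/-- `Λ/𝔪⁵`, by its coordinates in the basis `1, x, x², x³, x⁴, y, xy, x²y`. -/
def LamTrunc : Type := Fin 8 → ℂ

namespace LamTrunc

instance : AddCommGroup LamTrunc := inferInstanceAs (AddCommGroup (Fin 8 → ℂ))
instance : Module ℂ LamTrunc := inferInstanceAs (Module ℂ (Fin 8 → ℂ))

@[ext] theorem ext {u v : LamTrunc} (h : ∀ k, u k = v k) : u = v := funext h

@[simp] theorem add_apply (u v : LamTrunc) (k : Fin 8) : (u + v) k = u k + v k := rfl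
@[simp] theorem neg_apply (u : LamTrunc) (k : Fin 8) : (-u) k = -u k := rfl
@[simp] theorem zero_apply (k : Fin 8) : (0 : LamTrunc) k = 0 := rfl
@[simp] theorem smul_apply (r : ℂ) (u : LamTrunc) (k : Fin 8) : (r • u) k = r * u k := rfl

def mulCoeffs (u v : LamTrunc) : Fin 8 → ℂ :=
  ![u 0 * v 0,
    u 0 * v 1 + u 1 * v 0,
    u 0 * v 2 + u 1 * v 1 + u 2 * v 0,
    u 0 * v 3 + u 1 * v 2 + u 2 * v 1 + u 3 * v 0 + u 5 * v 5,
    u 0 * v 4 + u 1 * v 3 + u 2 * v 2 + u 3 * v 1 + u 4 * v 0 - u 5 * v 6 + u 6 * v 5,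
    u 0 * v 5 + u 5 * v 0,
    u 0 * v 6 + u 1 * v 5 - u 5 * v 1 + u 6 * v 0,
    u 0 * v 7 + u 1 * v 6 + u 2 * v 5 + u 5 * v 2 - u 6 * v 1 + u 7 * v 0]

instance : Mul LamTrunc := ⟨mulCoeffs⟩

theorem mul_apply (u v : LamTrunc) (k : Fin 8) : (u * v) k = mulCoeffs u v k := rfl

instance : One LamTrunc := ⟨fun k => if k = 0 then 1 else 0⟩

theorem one_apply (k : Fin 8) : (1 : LamTrunc) k = if k = 0 then 1 else 0 := rfl

instance : Ring LamTrunc where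
  mul_assoc u v w := by ext k; fin_cases k <;> simp [mul_apply, mulCoeffs] <;> ring
  one_mul u := by ext k; fin_cases k <;> simp [mul_apply, mulCoeffs, one_apply]
  mul_one u := by ext k; fin_cases k <;> simp [mul_apply, mulCoeffs, one_apply]
  left_distrib u v w := by ext k; fin_cases k <;> simp [mul_apply, mulCoeffs] <;> ring
  right_distrib u v w := by ext k; fin_cases k <;> simp [mul_apply, mulCoeffs] <;> ring
  zero_mul u := by ext k; fin_cases k <;> simp [mul_apply, mulCoeffs]
  mul_zero u := by ext k; fin_cases k <;> simp [mul_apply, mulCoeffs]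

instance : Algebra ℂ LamTrunc :=
  Algebra.ofModule (fun r u v => by ext k; fin_cases k <;> simp [mul_apply, mulCoeffs] <;> ring)
    (fun r u v => by ext k; fin_cases k <;> simp [mul_apply, mulCoeffs] <;> ring)

theorem algebraMap_apply (r : ℂ) (k : Fin 8) :
    algebraMap ℂ LamTrunc r k = if k = 0 then r else 0 := by
  rw [Algebra.algebraMap_eq_smul_one, smul_apply, one_apply]
  split_ifs <;> simp

def x : LamTrunc := fun k => if k = 1 then 1 else 0

def y : LamTrunc := fun k => if k = 5 then 1 else 0

theorem x_mul_y_add_y_mul_x : x * y + y * x = 0 := by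
  ext k; fin_cases k <;> simp [mul_apply, mulCoeffs, x, y]

theorem x_pow_three_eq_y_sq : x ^ 3 = y ^ 2 := by
  ext k; fin_cases k <;> simp [mul_apply, mulCoeffs, pow_succ, x, y]

def ofLam : RingQuot LamRel →ₐ[ℂ] LamTrunc :=
  RingQuot.liftAlgHom ℂ ⟨FreeAlgebra.lift ℂ ![x, y], fun _ _ h => by
    cases h
    · simpa using x_mul_y_add_y_mul_x
    · simpa [sub_eq_zero] using x_pow_three_eq_y_sq⟩

theorem ofLam_x : ofLam (RingQuot.mkAlgHom ℂ LamRel (ι ℂ 0)) = x := by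
  simp [ofLam]

theorem ofLam_y : ofLam (RingQuot.mkAlgHom ℂ LamRel (ι ℂ 1)) = y := by
  simp [ofLam]

theorem linear_coeffs_eq_zero_of_gamRel {A B : LamTrunc} (h₁ : A * B + B * A = 0)
    (h₂ : -A ^ 2 + B ^ 3 + A * B * A = 0) : A 1 = 0 ∧ A 5 = 0 := by
  have anticomm (k : Fin 8) : (A * B + B * A) k = 0 := by rw [h₁]; rfl
  have rel (k : Fin 8) : (-A ^ 2 + B ^ 3 + A * B * A) k = 0 := by rw [h₂]; rfl
  obtain ⟨hA₀, hB₀⟩ : A 0 = 0 ∧ B 0 = 0 :=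
    gamRel_scalar_eq_zero (by simpa [mul_apply, mulCoeffs] using anticomm 0)
      (by simpa [mul_apply, mulCoeffs, pow_succ] using rel 0)
  have hA₁ : A 1 = 0 := by simpa [mul_apply, mulCoeffs, pow_succ, hA₀, hB₀] using rel 2
  have anticomm₃ := anticomm 3
  have anticomm₇ := anticomm 7
  have rel₃ := rel 3
  have rel₄ := rel 4
  have rel₇ := rel 7
  simp [mul_apply, mulCoeffs, pow_succ, hA₀, hB₀, hA₁] at anticomm₃ anticomm₇ rel₃ rel₄ rel₇
  exact ⟨hA₁, gamRel_coeff_y_eq_zero (a₂ := A 2) (b₁ := B 1) (b₂ := B 2) (b₅ := B 5)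
    (by linear_combination rel₃) (by linear_combination -rel₄) (by linear_combination -rel₇)
    (by linear_combination anticomm₃ / 2) (by linear_combination anticomm₇ / 2)⟩

/-- `ℂ + ℂ B + 𝔪²`. -/
def lineSubalgebra (B : LamTrunc) : Subalgebra ℂ LamTrunc where
  carrier := {m | ∃ t : ℂ, m 1 = t * B 1 ∧ m 5 = t * B 5}
  mul_mem' := by
    rintro u v ⟨t, hu₁, hu₅⟩ ⟨s, hv₁, hv₅⟩
    refine ⟨u 0 * s + t * v 0, ?_, ?_⟩ <;>
      simp [mul_apply, mulCoeffs, hu₁, hu₅, hv₁, hv₅] <;> ring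
  add_mem' := by
    rintro u v ⟨t, hu₁, hu₅⟩ ⟨s, hv₁, hv₅⟩
    exact ⟨t + s, by simp [hu₁, hv₁]; ring, by simp [hu₅, hv₅]; ring⟩
  algebraMap_mem' r := ⟨0, by simp [algebraMap_apply], by simp [algebraMap_apply]⟩

theorem not_x_mem_and_y_mem (B : LamTrunc) : ¬ (x ∈ lineSubalgebra B ∧ y ∈ lineSubalgebra B) := by
  rintro ⟨⟨t, hx₁, hx₅⟩, ⟨s, hy₁, hy₅⟩⟩
  change (1 : ℂ) = t * B 1 at hx₁
  change (0 : ℂ) = t * B 5 at hx₅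
  change (0 : ℂ) = s * B 1 at hy₁
  change (1 : ℂ) = s * B 5 at hy₅
  exact one_ne_zero (by linear_combination hx₁ + t * B 1 * hy₅ - t * B 5 * hy₁ : (1 : ℂ) = 0)

theorem range_le_lineSubalgebra (ψ : RingQuot GamRel →ₐ[ℂ] LamTrunc) :
    ψ.range ≤ lineSubalgebra (ψ (RingQuot.mkAlgHom ℂ GamRel (ι ℂ 1))) := by
  set a := ψ (RingQuot.mkAlgHom ℂ GamRel (ι ℂ 0))
  set b := ψ (RingQuot.mkAlgHom ℂ GamRel (ι ℂ 1))
  have h₁ : a * b + b * a = 0 := by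
    simpa [a, b] using congrArg ψ (RingQuot.mkAlgHom_rel ℂ GamRel.r1)
  have h₂ : -a ^ 2 + b ^ 3 + a * b * a = 0 := by
    simpa [a, b] using congrArg ψ (RingQuot.mkAlgHom_rel ℂ GamRel.r2)
  obtain ⟨ha₁, ha₅⟩ := linear_coeffs_eq_zero_of_gamRel h₁ h₂
  refine RingQuot.range_le_of_forall_mkAlgHom_ι_mem ψ fun i => ?_
  fin_cases i
  · exact ⟨0, by simpa using ha₁, by simpa using ha₅⟩
  · exact ⟨1, (one_mul _).symm, (one_mul _).symm⟩

end LamTrunc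

theorem stmt6 : IsEmpty (RingQuot LamRel ≃ₐ[ℂ] RingQuot GamRel) := by
  refine ⟨fun e => ?_⟩
  let ψ := LamTrunc.ofLam.comp e.symm.toAlgHom
  have mem_range (z : RingQuot LamRel) : LamTrunc.ofLam z ∈ ψ.range := ⟨e z, by simp [ψ]⟩
  exact LamTrunc.not_x_mem_and_y_mem _
    ⟨LamTrunc.range_le_lineSubalgebra ψ (LamTrunc.ofLam_x ▸ mem_range _),
      LamTrunc.range_le_lineSubalgebra ψ (LamTrunc.ofLam_y ▸ mem_range _)⟩
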